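/- The residual entropy R_X^T = H_X^T − T_{X→Y}^T is non-negative: the entropy rate of X is at least the transfer entropy from X to Y, i.e., Σ_{t=1}^T H(X^t|X̄^{t-1}) ≥ Σ_{t=1}^T I(Y^t; X̄^{t-1}|Ȳ^{t-1}). -/
import Mathlib


open scoped BigOperators

noncomputable section

variable {Ω : Type*} [Fintype Ω] [DecidableEq Ω]

/-- Probability of the event `X = s` under the mass function `p`. -/
def prob (p : Ω → ℝ) {S : Type*} [DecidableEq S] (X : Ω → S) (s : S) : ℝ :=
  ∑ ω, if X ω = s then p ω else 0

/-- Shannon entropy of a finite-valued random variable. -/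
def entropy (p : Ω → ℝ) {S : Type*} [Fintype S] [DecidableEq S] (X : Ω → S) : ℝ :=
  -∑ s, prob p X s * Real.log (prob p X s)

/-- Conditional Shannon entropy `H(X | Y)`. -/
def condEntropy (p : Ω → ℝ) {S T' : Type*} [Fintype S] [DecidableEq S] [Fintype T']
    [DecidableEq T'] (X : Ω → S) (Y : Ω → T') : ℝ :=
  entropy p (fun ω => (X ω, Y ω)) - entropy p Y

/-- Mutual information `I(X; Y)`. -/
def mutualInfo (p : Ω → ℝ) {S T' : Type*} [Fintype S] [DecidableEq S] [Fintype T']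
    [DecidableEq T'] (X : Ω → S) (Y : Ω → T') : ℝ :=
  entropy p X - condEntropy p X Y

/-- Conditional mutual information `I(X; Y | Z)`. -/
def condMutualInfo (p : Ω → ℝ) {S T' U : Type*} [Fintype S] [DecidableEq S] [Fintype T']
    [DecidableEq T'] [Fintype U] [DecidableEq U] (X : Ω → S) (Y : Ω → T') (Z : Ω → U) : ℝ :=
  condEntropy p X Z - condEntropy p X (fun ω => (Y ω, Z ω))

/-- The past trajectory `X̄^{t-1} = (X^0, …, X^{t-1})` (0-indexed). -/
def past {S : Type*} (X : ℕ → Ω → S) (t : ℕ) (ω : Ω) : Fin t → S :=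
  fun k => X k ω

/-- `p` is a probability mass function. -/
def IsProb (p : Ω → ℝ) : Prop := (∀ ω, 0 ≤ p ω) ∧ ∑ ω, p ω = 1

/-- Conditional independence of `X` and `Y` given `Z` (for finite-valued random variables). -/
def CondIndep (p : Ω → ℝ) {S T' U : Type*} [DecidableEq S] [DecidableEq T'] [DecidableEq U]
    (X : Ω → S) (Y : Ω → T') (Z : Ω → U) : Prop :=
  ∀ s t u, prob p (fun ω => (X ω, Y ω, Z ω)) (s, t, u) * prob p Z u =
    prob p (fun ω => (X ω, Z ω)) (s, u) * prob p (fun ω => (Y ω, Z ω)) (t, u)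

/-- Pairwise transfer entropy `T_{Y→X}^T = Σ_t I(X^t; Ȳ^{t-1} | X̄^{t-1})` (from `Y` to `X`). -/
def pte (p : Ω → ℝ) {S T' : Type*} [Fintype S] [DecidableEq S] [Fintype T'] [DecidableEq T']
    (Y : ℕ → Ω → T') (X : ℕ → Ω → S) (T : ℕ) : ℝ :=
  ∑ t ∈ Finset.range T, condMutualInfo p (X t) (past Y t) (past X t)

/-- Entropy rate `H_X^T = Σ_t H(X^t | X̄^{t-1})`. -/
def entropyRate (p : Ω → ℝ) {S : Type*} [Fintype S] [DecidableEq S] (X : ℕ → Ω → S)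
    (T : ℕ) : ℝ :=
  ∑ t ∈ Finset.range T, condEntropy p (X t) (past X t)

/-- Free entropy `F_X^T = Σ_t H(X^t | X̄^{t-1}, Ȳ^{t-1})`. -/
def freeEntropy (p : Ω → ℝ) {S T' : Type*} [Fintype S] [DecidableEq S] [Fintype T']
    [DecidableEq T'] (X : ℕ → Ω → S) (Y : ℕ → Ω → T') (T : ℕ) : ℝ :=
  ∑ t ∈ Finset.range T, condEntropy p (X t) (fun ω => (past X t ω, past Y t ω))

/-- Residual entropy `R_{X,Y}^T = Σ_t I(X^t; Y^t | X̄^{t-1}, Ȳ^{t-1})`. -/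
def residualEntropy (p : Ω → ℝ) {S T' : Type*} [Fintype S] [DecidableEq S] [Fintype T']
    [DecidableEq T'] (X : ℕ → Ω → S) (Y : ℕ → Ω → T') (T : ℕ) : ℝ :=
  ∑ t ∈ Finset.range T, condMutualInfo p (X t) (Y t) (fun ω => (past X t ω, past Y t ω))


set_option linter.unusedSectionVars false
set_option maxHeartbeats 1000000

section Aux
variable {S T' U V V₂ : Type*}

lemma key_ineq {a b c d : ℝ} (ha : 0 ≤ a) (hab : a ≤ b) (had : a ≤ d) (hbc : b ≤ c) :
    a * Real.log b + a * Real.log d - a * Real.log a - a * Real.log c ≤ b * d / c - a := by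
  rcases eq_or_lt_of_le ha with h | h
  · rw [← h]
    simp only [zero_mul, sub_zero, add_zero, zero_sub, neg_zero, sub_zero]
    have hc : 0 ≤ c := le_trans (le_trans ha hab) hbc
    have : 0 ≤ b * d / c := div_nonneg (mul_nonneg (le_trans ha hab) (le_trans ha had)) hc
    linarith
  · have hb : 0 < b := lt_of_lt_of_le h hab
    have hd : 0 < d := lt_of_lt_of_le h had
    have hc : 0 < c := lt_of_lt_of_le hb hbc
    have key : Real.log (b * d / (a * c)) ≤ b * d / (a * c) - 1 :=
      Real.log_le_sub_one_of_pos (by positivity)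
    have expand : Real.log (b * d / (a * c))
        = Real.log b + Real.log d - Real.log a - Real.log c := by
      rw [Real.log_div (by positivity) (by positivity), Real.log_mul hb.ne' hd.ne',
        Real.log_mul h.ne' hc.ne']
      ring
    have h2 : a * Real.log (b * d / (a * c)) ≤ a * (b * d / (a * c) - 1) :=
      mul_le_mul_of_nonneg_left key h.le
    have h3 : a * (b * d / (a * c) - 1) = b * d / c - a := by
      field_simp
    calc a * Real.log b + a * Real.log d - a * Real.log a - a * Real.log c
        = a * Real.log (b * d / (a * c)) := by rw [expand]; ring
      _ ≤ a * (b * d / (a * c) - 1) := h2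
      _ = b * d / c - a := h3

lemma sum_phi_le [Fintype S] [Fintype U] (q : S → U → ℝ) (hq : ∀ s u, 0 ≤ q s u) :
    ∑ s, ∑ u, q s u * Real.log (q s u)
      ≤ ∑ u, (∑ s, q s u) * Real.log (∑ s, q s u) := by
  rw [Finset.sum_comm]
  refine Finset.sum_le_sum fun u _ => ?_
  calc ∑ s, q s u * Real.log (q s u)
      ≤ ∑ s, q s u * Real.log (∑ s', q s' u) := by
        refine Finset.sum_le_sum fun s _ => ?_
        rcases eq_or_lt_of_le (hq s u) with h | h
        · simp [← h]
        · exact mul_le_mul_of_nonneg_left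
            (Real.log_le_log h (Finset.single_le_sum (fun s' _ => hq s' u) (Finset.mem_univ s)))
            h.le
    _ = (∑ s, q s u) * Real.log (∑ s, q s u) := by rw [← Finset.sum_mul]

lemma cmi_core [Fintype S] [Fintype T'] [Fintype U] (q : S → T' → U → ℝ)
    (hq : ∀ s t u, 0 ≤ q s t u) :
    ∑ s, ∑ u, (∑ t, q s t u) * Real.log (∑ t, q s t u)
      + ∑ t, ∑ u, (∑ s, q s t u) * Real.log (∑ s, q s t u)
    ≤ ∑ s, ∑ t, ∑ u, q s t u * Real.log (q s t u)
      + ∑ u, (∑ s, ∑ t, q s t u) * Real.log (∑ s, ∑ t, q s t u) := by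
  set b : S → U → ℝ := fun s u => ∑ t, q s t u with hbdef
  set d : T' → U → ℝ := fun t u => ∑ s, q s t u with hddef
  set c : U → ℝ := fun u => ∑ s, ∑ t, q s t u with hcdef
  have hqb : ∀ s t u, q s t u ≤ b s u := fun s t u =>
    Finset.single_le_sum (fun t' _ => hq s t' u) (Finset.mem_univ t)
  have hqd : ∀ s t u, q s t u ≤ d t u := fun s t u =>
    Finset.single_le_sum (fun s' _ => hq s' t u) (Finset.mem_univ s)
  have hbc : ∀ s u, b s u ≤ c u := fun s u =>
    Finset.single_le_sum (fun s' _ => Finset.sum_nonneg fun t _ => hq s' t u) (Finset.mem_univ s)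
  have hcnn : ∀ u, 0 ≤ c u := fun u =>
    Finset.sum_nonneg fun s _ => Finset.sum_nonneg fun t _ => hq s t u
  have hsd : ∀ u, ∑ t, d t u = c u := fun u => Finset.sum_comm
  -- rewrite the marginal entropy sums as triple sums
  have e1 : ∑ s, ∑ u, b s u * Real.log (b s u)
      = ∑ s, ∑ t, ∑ u, q s t u * Real.log (b s u) := by
    refine Finset.sum_congr rfl fun s _ => ?_
    rw [Finset.sum_comm]
    refine Finset.sum_congr rfl fun u _ => ?_
    rw [← Finset.sum_mul]
  have e2 : ∑ t, ∑ u, d t u * Real.log (d t u)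
      = ∑ s, ∑ t, ∑ u, q s t u * Real.log (d t u) :=
    calc ∑ t, ∑ u, d t u * Real.log (d t u)
        = ∑ t, ∑ u, ∑ s, q s t u * Real.log (d t u) := by
          refine Finset.sum_congr rfl fun t _ => Finset.sum_congr rfl fun u _ => ?_
          rw [← Finset.sum_mul]
      _ = ∑ t, ∑ s, ∑ u, q s t u * Real.log (d t u) := by
          exact Finset.sum_congr rfl fun t _ => Finset.sum_comm
      _ = ∑ s, ∑ t, ∑ u, q s t u * Real.log (d t u) := Finset.sum_comm
  have e3 : ∑ u, c u * Real.log (c u)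
      = ∑ s, ∑ t, ∑ u, q s t u * Real.log (c u) :=
    calc ∑ u, c u * Real.log (c u)
        = ∑ u, ∑ s, ∑ t, q s t u * Real.log (c u) := by
          refine Finset.sum_congr rfl fun u _ => ?_
          rw [Finset.sum_mul]
          exact Finset.sum_congr rfl fun s _ => Finset.sum_mul _ _ _
      _ = ∑ s, ∑ u, ∑ t, q s t u * Real.log (c u) := Finset.sum_comm
      _ = ∑ s, ∑ t, ∑ u, q s t u * Real.log (c u) := by
          exact Finset.sum_congr rfl fun s _ => Finset.sum_comm
  have hqc : ∑ s, ∑ t, ∑ u, q s t u = ∑ u, c u :=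
    calc ∑ s, ∑ t, ∑ u, q s t u
        = ∑ s, ∑ u, ∑ t, q s t u := Finset.sum_congr rfl fun s _ => Finset.sum_comm
      _ = ∑ u, ∑ s, ∑ t, q s t u := Finset.sum_comm
  have hbd : ∑ s, ∑ t, ∑ u, b s u * d t u / c u = ∑ u, c u := by
    have reorder : ∑ s, ∑ t, ∑ u, b s u * d t u / c u
        = ∑ u, ∑ s, ∑ t, b s u * d t u / c u :=
      calc ∑ s, ∑ t, ∑ u, b s u * d t u / c u
          = ∑ s, ∑ u, ∑ t, b s u * d t u / c u :=
            Finset.sum_congr rfl fun s _ => Finset.sum_comm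
        _ = ∑ u, ∑ s, ∑ t, b s u * d t u / c u := Finset.sum_comm
    rw [reorder]
    refine Finset.sum_congr rfl fun u _ => ?_
    have h1 : ∀ s, ∑ t, b s u * d t u / c u = b s u * (∑ t, d t u) / c u := by
      intro s
      rw [← Finset.sum_div, ← Finset.mul_sum]
    simp_rw [h1, hsd u]
    rw [← Finset.sum_div, ← Finset.sum_mul]
    have hsb : ∑ s, b s u = c u := rfl
    rw [hsb]
    rcases eq_or_lt_of_le (hcnn u) with h | h
    · rw [← h]; simp
    · rw [mul_div_assoc, div_self h.ne', mul_one]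
  have main : ∑ s, ∑ t, ∑ u,
      (q s t u * Real.log (b s u) + q s t u * Real.log (d t u)
        - q s t u * Real.log (q s t u) - q s t u * Real.log (c u))
      ≤ ∑ s, ∑ t, ∑ u, (b s u * d t u / c u - q s t u) := by
    refine Finset.sum_le_sum fun s _ => Finset.sum_le_sum fun t _ => Finset.sum_le_sum
      fun u _ => key_ineq (hq s t u) (hqb s t u) (hqd s t u) (hbc s u)
  have hz : ∑ s, ∑ t, ∑ u, (b s u * d t u / c u - q s t u) = 0 := by
    simp_rw [Finset.sum_sub_distrib]
    rw [hbd, hqc]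
    ring
  rw [hz] at main
  simp_rw [sub_sub, Finset.sum_sub_distrib, Finset.sum_add_distrib] at main
  rw [e1, e2, e3]
  linarith


lemma prob_nonneg (p : Ω → ℝ) (hp : ∀ ω, 0 ≤ p ω) [DecidableEq S] (X : Ω → S) (s : S) :
    0 ≤ prob p X s := by
  refine Finset.sum_nonneg fun ω _ => ?_
  split_ifs
  · exact hp ω
  · exact le_refl 0

lemma prob_snd (p : Ω → ℝ) [Fintype S] [DecidableEq S] [DecidableEq U]
    (X : Ω → S) (Z : Ω → U) (u : U) :
    ∑ s, prob p (fun ω => (X ω, Z ω)) (s, u) = prob p Z u := by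
  unfold prob
  rw [Finset.sum_comm]
  refine Finset.sum_congr rfl fun ω _ => ?_
  have h : ∀ s, (if (X ω, Z ω) = (s, u) then p ω else 0)
      = if X ω = s then (if Z ω = u then p ω else 0) else 0 := by
    intro s
    by_cases h1 : X ω = s <;> by_cases h2 : Z ω = u <;> simp [h1, h2, Prod.ext_iff]
  simp_rw [h]
  rw [Finset.sum_ite_eq Finset.univ (X ω)]
  simp

lemma prob_mid (p : Ω → ℝ) [Fintype T'] [DecidableEq S] [DecidableEq T'] [DecidableEq U]
    (X : Ω → S) (Y : Ω → T') (Z : Ω → U) (s : S) (u : U) :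
    ∑ t, prob p (fun ω => (X ω, Y ω, Z ω)) (s, t, u) = prob p (fun ω => (X ω, Z ω)) (s, u) := by
  unfold prob
  rw [Finset.sum_comm]
  refine Finset.sum_congr rfl fun ω _ => ?_
  have h : ∀ t, (if (X ω, Y ω, Z ω) = (s, t, u) then p ω else 0)
      = if Y ω = t then (if (X ω, Z ω) = (s, u) then p ω else 0) else 0 := by
    intro t
    by_cases h1 : X ω = s <;> by_cases h2 : Y ω = t <;> by_cases h3 : Z ω = u <;>
      simp [h1, h2, h3, Prod.ext_iff]
  simp_rw [h]
  rw [Finset.sum_ite_eq Finset.univ (Y ω)]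
  simp

lemma entropy_comp_inj (p : Ω → ℝ) [Fintype S] [DecidableEq S] [Fintype T'] [DecidableEq T']
    (X : Ω → S) (g : S → T') (hg : Function.Injective g) :
    entropy p (fun ω => g (X ω)) = entropy p X := by
  unfold entropy
  congr 1
  have hprob : ∀ s, prob p (fun ω => g (X ω)) (g s) = prob p X s := by
    intro s
    refine Finset.sum_congr rfl fun ω _ => ?_
    simp [hg.eq_iff]
  have hzero : ∀ b ∈ Finset.univ, b ∉ Finset.univ.image g →
      prob p (fun ω => g (X ω)) b * Real.log (prob p (fun ω => g (X ω)) b) = 0 := by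
    intro b _ hb
    have hz : prob p (fun ω => g (X ω)) b = 0 := by
      refine Finset.sum_eq_zero fun ω _ => ?_
      have : g (X ω) ≠ b := fun h => hb (Finset.mem_image.mpr ⟨X ω, Finset.mem_univ _, h⟩)
      simp [this]
    simp [hz]
  calc ∑ b : T', prob p (fun ω => g (X ω)) b * Real.log (prob p (fun ω => g (X ω)) b)
      = ∑ b ∈ Finset.univ.image g,
          prob p (fun ω => g (X ω)) b * Real.log (prob p (fun ω => g (X ω)) b) :=
        (Finset.sum_subset (Finset.subset_univ _) hzero).symm
    _ = ∑ s : S, prob p (fun ω => g (X ω)) (g s) * Real.log (prob p (fun ω => g (X ω)) (g s)) :=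
        Finset.sum_image fun x _ y _ h => hg h
    _ = ∑ s : S, prob p X s * Real.log (prob p X s) :=
        Finset.sum_congr rfl fun s _ => by rw [hprob]

lemma entropy_unique [Fintype V] [DecidableEq V] [Unique V] (p : Ω → ℝ) (hp : IsProb p)
    (X : Ω → V) : entropy p X = 0 := by
  unfold entropy
  rw [Fintype.sum_unique]
  have : prob p X default = 1 := by
    unfold prob
    rw [← hp.2]
    refine Finset.sum_congr rfl fun ω _ => ?_
    rw [if_pos (Subsingleton.elim _ _)]
  simp [this]

lemma condEntropy_nonneg (p : Ω → ℝ) (hp : IsProb p) [Fintype S] [DecidableEq S] [Fintype U]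
    [DecidableEq U] (X : Ω → S) (Z : Ω → U) : 0 ≤ condEntropy p X Z := by
  unfold condEntropy entropy
  rw [sub_nonneg, neg_le_neg_iff]
  rw [Fintype.sum_prod_type]
  have h := sum_phi_le (fun s u => prob p (fun ω => (X ω, Z ω)) (s, u))
    (fun s u => prob_nonneg p hp.1 _ _)
  simp_rw [prob_snd p X Z] at h
  exact h

lemma condMutualInfo_nonneg (p : Ω → ℝ) (hp : IsProb p) [Fintype S] [DecidableEq S]
    [Fintype T'] [DecidableEq T'] [Fintype U] [DecidableEq U]
    (X : Ω → S) (Y : Ω → T') (Z : Ω → U) : 0 ≤ condMutualInfo p X Y Z := by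
  unfold condMutualInfo condEntropy entropy
  have h := cmi_core (fun s t u => prob p (fun ω => (X ω, Y ω, Z ω)) (s, t, u))
    (fun s t u => prob_nonneg p hp.1 _ _)
  simp_rw [prob_mid p X Y Z, prob_snd p X (fun ω => (Y ω, Z ω)), prob_snd p X Z] at h
  simp only [Fintype.sum_prod_type]
  linarith


lemma condEntropy_comp (p : Ω → ℝ) [Fintype S] [DecidableEq S] [Fintype U] [DecidableEq U]
    [Fintype V] [DecidableEq V] (X : Ω → S) (Z : Ω → U) (g : U → V)
    (hg : Function.Injective g) :
    condEntropy p X (fun ω => g (Z ω)) = condEntropy p X Z := by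
  unfold condEntropy
  rw [entropy_comp_inj p Z g hg]
  congr 1
  exact entropy_comp_inj p (fun ω => (X ω, Z ω)) (fun su => (su.1, g su.2))
    fun a b hab => by
      have h1 := congrArg Prod.fst hab
      have h2 := hg (congrArg Prod.snd hab)
      exact Prod.ext h1 h2

lemma cmi_comp_le (p : Ω → ℝ) (hp : IsProb p) [Fintype S] [DecidableEq S] [Fintype U]
    [DecidableEq U] [Fintype V] [DecidableEq V] [Fintype V₂] [DecidableEq V₂]
    (A : Ω → S) (W : Ω → V) (C : Ω → U) (f : V → V₂) (W₂ : Ω → V₂)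
    (hW₂ : W₂ = fun ω => f (W ω)) :
    condMutualInfo p A W₂ C ≤ condMutualInfo p A W C := by
  subst hW₂
  have h1 : condEntropy p A (fun ω => (W ω, C ω))
      = condEntropy p A (fun ω => (W ω, (f (W ω), C ω))) := by
    have hg : Function.Injective (fun wc : V × U => (wc.1, (f wc.1, wc.2))) := by
      intro a b hab
      have h1 := congrArg Prod.fst hab
      have h2 := congrArg (fun x => x.2.2) hab
      exact Prod.ext h1 h2
    exact (condEntropy_comp p A (fun ω => (W ω, C ω)) _ hg).symm
  have h2 := condMutualInfo_nonneg p hp A W (fun ω => (f (W ω), C ω))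
  unfold condMutualInfo at h2 ⊢
  rw [h1]
  linarith

lemma snoc_inj {n : ℕ} : Function.Injective
    (fun av : S × (Fin n → S) => (Fin.snoc av.2 av.1 : Fin (n + 1) → S)) := by
  rintro ⟨a, v⟩ ⟨a', v'⟩ h
  simp only at h
  have h1 : a = a' := by
    have := congrFun h (Fin.last n)
    simpa using this
  have h2 : v = v' := by
    funext j
    have := congrFun h (Fin.castSucc j)
    simpa using this
  rw [h1, h2]

end Aux

section PastAux

variable {S T' U V V₂ : Type*}

lemma past_succ {S : Type*} (X : ℕ → Ω → S) (t : ℕ) (ω : Ω) :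
    past X (t + 1) ω = Fin.snoc (past X t ω) (X t ω) := by
  funext k
  refine Fin.lastCases ?_ ?_ k
  · simp [past, Fin.snoc_last, Fin.val_last]
  · intro j
    simp [past, Fin.snoc_castSucc, Fin.coe_castSucc]

lemma entropy_past_succ (p : Ω → ℝ) {S : Type*} [Fintype S] [DecidableEq S] (X : ℕ → Ω → S)
    (t : ℕ) : entropy p (fun ω => (X t ω, past X t ω)) = entropy p (past X (t + 1)) := by
  have hpe : past X (t + 1) = fun ω =>
      (fun av : S × (Fin t → S) => (Fin.snoc av.2 av.1 : Fin (t + 1) → S)) (X t ω, past X t ω) := by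
    funext ω
    exact past_succ X t ω
  rw [hpe, entropy_comp_inj p _ _ snoc_inj]

end PastAux

/-- Residual entropy non-negativity: `H_X^T ≥ T_{X→Y}^T`, i.e.
`Σ_t H(X^t|X̄^{t-1}) ≥ Σ_t I(Y^t; X̄^{t-1}|Ȳ^{t-1})`. -/
theorem entropyRate_ge_pte (p : Ω → ℝ) (hp : IsProb p)
    {S T' : Type*} [Fintype S] [DecidableEq S] [Fintype T'] [DecidableEq T']
    (X : ℕ → Ω → S) (Y : ℕ → Ω → T') (T : ℕ) :
    pte p X Y T ≤ entropyRate p X T := by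
  classical
  have hstep1 : pte p X Y T
      ≤ ∑ t ∈ Finset.range T, condMutualInfo p (Y t) (past X T) (past Y t) := by
    unfold pte
    refine Finset.sum_le_sum fun t ht => ?_
    have htT : t ≤ T := (Finset.mem_range.mp ht).le
    exact cmi_comp_le p hp (Y t) (past X T) (past Y t)
      (fun w k => w (Fin.castLE htT k)) (past X t)
      (by funext ω k; simp [past, Fin.coe_castLE])
  have hterm : ∀ t : ℕ, condMutualInfo p (Y t) (past X T) (past Y t)
      = (entropy p (past Y (t + 1)) - entropy p (past Y t))
        - (entropy p (fun ω => (past X T ω, past Y (t + 1) ω))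
            - entropy p (fun ω => (past X T ω, past Y t ω))) := by
    intro t
    have h3 : entropy p (fun ω => (Y t ω, (past X T ω, past Y t ω)))
        = entropy p (fun ω => (past X T ω, past Y (t + 1) ω)) := by
      have hg : Function.Injective (fun x : T' × ((Fin T → S) × (Fin t → T')) =>
          ((x.2.1, Fin.snoc x.2.2 x.1) : (Fin T → S) × (Fin (t + 1) → T'))) := by
        rintro ⟨a1, a2, a3⟩ ⟨b1, b2, b3⟩ h
        simp only [Prod.mk.injEq] at h
        obtain ⟨h1, h2⟩ := h
        have h3 : ((a1, a3) : T' × (Fin t → T')) = (b1, b3) := snoc_inj h2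
        simp only [Prod.mk.injEq] at h3
        simp [h1, h3.1, h3.2]
      have heq : (fun ω => (past X T ω, past Y (t + 1) ω))
          = fun ω => (fun x : T' × ((Fin T → S) × (Fin t → T')) =>
              ((x.2.1, Fin.snoc x.2.2 x.1) : (Fin T → S) × (Fin (t + 1) → T')))
              (Y t ω, (past X T ω, past Y t ω)) := by
        funext ω
        exact Prod.ext rfl (past_succ Y t ω)
      rw [heq, entropy_comp_inj p _ _ hg]
    unfold condMutualInfo condEntropy
    rw [entropy_past_succ p Y t, h3]
  have hW0 : entropy p (fun ω => (past X T ω, past Y 0 ω)) = entropy p (past X T) := by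
    have heq : (fun ω => (past X T ω, past Y 0 ω))
        = fun ω => (fun w : Fin T → S =>
            ((w, fun k : Fin 0 => k.elim0) : (Fin T → S) × (Fin 0 → T'))) (past X T ω) := by
      funext ω
      exact Prod.ext rfl (Subsingleton.elim _ _)
    rw [heq]
    exact entropy_comp_inj p (past X T)
      (fun w : Fin T → S => ((w, fun k : Fin 0 => k.elim0) : (Fin T → S) × (Fin 0 → T')))
      (fun a b h => congrArg Prod.fst h)
  have hsum2 : ∑ t ∈ Finset.range T, condMutualInfo p (Y t) (past X T) (past Y t)
      = entropy p (past X T) - condEntropy p (past X T) (past Y T) := by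
    rw [Finset.sum_congr rfl fun t _ => hterm t, Finset.sum_sub_distrib,
      Finset.sum_range_sub (fun t => entropy p (past Y t)),
      Finset.sum_range_sub (fun t => entropy p (fun ω => (past X T ω, past Y t ω))),
      entropy_unique p hp (past Y 0), hW0]
    unfold condEntropy
    ring
  have hrate : entropyRate p X T = entropy p (past X T) := by
    unfold entropyRate
    have h : ∀ t, condEntropy p (X t) (past X t)
        = entropy p (past X (t + 1)) - entropy p (past X t) := fun t => by
      unfold condEntropy
      rw [entropy_past_succ p X t]
    rw [Finset.sum_congr rfl fun t _ => h t,
      Finset.sum_range_sub (fun t => entropy p (past X t)),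
      entropy_unique p hp (past X 0), sub_zero]
  have hnn : 0 ≤ condEntropy p (past X T) (past Y T) := condEntropy_nonneg p hp _ _
  linarith

end
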